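/- arXiv:1610.08483 — 2 statements merged into one kernel-verified Lean document; each statement's English description precedes it below -/
import Mathlib

section
/- Let θ ∈ (0,π) with θ/π irrational and let B ∈ SL(2,ℝ). Then the set of integers n ∈ ℤ such that 0 < |tr(B·R(θ)ⁿ)| < 2 is infinite; in particular B·R(θ)ⁿ is elliptic for infinitely many n. -/
open Matrix Real

noncomputable section

/-- `SL(2,ℝ)`. -/
abbrev SL2R := Matrix.SpecialLinearGroup (Fin 2) ℝ

/-- The rotation matrix `R(θ) = [[cos θ, sin θ], [-sin θ, cos θ]]`, as an element of `SL(2,ℝ)`. -/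
def rotMat (θ : ℝ) : SL2R :=
  ⟨!![Real.cos θ, Real.sin θ; -Real.sin θ, Real.cos θ], by
    simp [Matrix.det_fin_two_of]
    ring_nf
    nlinarith [Real.sin_sq_add_cos_sq θ]⟩

/-!
Writing `B = [[a, b], [c, d]]`, the trace of `B · R(θ)ⁿ = B · R(nθ)` is
`(a + d) cos nθ + (c - b) sin nθ`, a continuous function of the angle `nθ` which is not identically
zero because `(a + d)² + (c - b)² = (a - d)² + (b + c)² + 4 ≥ 4`. It changes sign under `ψ ↦ ψ + π`,
so on the connected circle it takes every value in some interval `[-r, r]`, `r > 0`; hence the angles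
where `0 < |tr| < 2` form a nonempty open set. Since `θ / 2π` is irrational, the multiples `nθ` are
dense in the circle, and a dense orbit in a perfect T₁ space meets every nonempty open set infinitely
often.
-/

open Topology

theorem DenseRange.infinite_preimage {ι X : Type*} [TopologicalSpace X] [T1Space X]
    [∀ x : X, (𝓝[≠] x).NeBot] {f : ι → X} (hf : DenseRange f) {U : Set X}
    (hU : IsOpen U) (hne : U.Nonempty) : (f ⁻¹' U).Infinite := by
  intro hfin
  obtain ⟨_, hV, ⟨i, rfl⟩, hi⟩ :=
    (hf.sdiff_finite (hfin.image f)).inter_open_nonempty U hU hne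
  exact hi ⟨i, hV, rfl⟩

theorem Continuous.exists_abs_mem_Ioo {X : Type*} [TopologicalSpace X] [PreconnectedSpace X]
    {f : X → ℝ} (hf : Continuous f) {a b : X} (ha : f a ≠ 0) (hb : f b = -f a) {ε : ℝ}
    (hε : 0 < ε) : ∃ x, |f x| ∈ Set.Ioo 0 ε := by
  have hrange : Set.Icc (-|f a|) |f a| ⊆ Set.range f := by
    have hpm : ∀ s, s = f a ∨ s = -f a → s ∈ Set.range f := by
      rintro s (rfl | rfl)
      exacts [⟨a, rfl⟩, ⟨b, hb⟩]
    apply (isPreconnected_range hf).ordConnected.out <;> apply hpm <;>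
      rcases abs_choice (f a) with h | h <;> simp [h]
  set c := min |f a| (ε / 2)
  have hc : 0 < c := lt_min (abs_pos.2 ha) (half_pos hε)
  obtain ⟨x, hx⟩ := hrange ⟨by linarith [min_le_left |f a| (ε / 2)], min_le_left _ _⟩
  refine ⟨x, ?_, ?_⟩ <;> rw [hx, abs_of_pos hc]
  · exact hc
  · linarith [min_le_right |f a| (ε / 2)]

instance : ConnectedSpace Real.Angle := inferInstanceAs (ConnectedSpace (AddCircle (2 * π)))

instance : Nontrivial Real.Angle := ⟨⟨π, 0, Real.Angle.pi_ne_zero⟩⟩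

theorem rotMat_add (x y : ℝ) : rotMat (x + y) = rotMat x * rotMat y := by
  ext i j
  rw [Matrix.SpecialLinearGroup.coe_mul]
  fin_cases i <;> fin_cases j <;>
    simp only [rotMat, cos_add, sin_add, of_apply, cons_val', cons_val_zero, cons_val_one,
      cons_val_fin_one, Matrix.mul_apply, Fin.sum_univ_two, Fin.isValue, Fin.zero_eta,
      Fin.mk_one] <;>
    ring

theorem rotMat_zero : rotMat 0 = 1 := by
  ext i j
  fin_cases i <;> fin_cases j <;> simp [rotMat]

theorem rotMat_zpow (θ : ℝ) (n : ℤ) : rotMat θ ^ n = rotMat (n * θ) := by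
  induction n using Int.induction_on with
  | zero => simpa using rotMat_zero.symm
  | succ k ih => rw [_root_.zpow_add_one, ih, ← rotMat_add]; push_cast; ring_nf
  | pred k ih =>
    rw [_root_.zpow_sub_one, ih, inv_eq_of_mul_eq_one_right (b := rotMat (-θ)), ← rotMat_add]
    · push_cast; ring_nf
    · rw [← rotMat_add, add_neg_cancel, rotMat_zero]

/-- The trace of `B · R(ψ)`, as a function of the angle `ψ`. -/
def traceMulRot (B : SL2R) (ψ : Real.Angle) : ℝ :=
  (B 0 0 + B 1 1) * ψ.cos + (B 1 0 - B 0 1) * ψ.sin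

theorem trace_mul_rotMat (B : SL2R) (x : ℝ) :
    Matrix.trace ((B * rotMat x : SL2R) : Matrix (Fin 2) (Fin 2) ℝ) = traceMulRot B x := by
  rw [Matrix.SpecialLinearGroup.coe_mul]
  simp only [traceMulRot, rotMat, trace_fin_two, Matrix.mul_apply, of_apply, cons_val',
    cons_val_zero, cons_val_one, cons_val_fin_one, Fin.sum_univ_two, Fin.isValue, Angle.cos_coe,
    Angle.sin_coe]
  ring

theorem continuous_traceMulRot (B : SL2R) : Continuous (traceMulRot B) :=
  (continuous_const.mul Real.Angle.continuous_cos).add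
    (continuous_const.mul Real.Angle.continuous_sin)

theorem traceMulRot_add_pi (B : SL2R) (ψ : Real.Angle) :
    traceMulRot B (ψ + π) = -traceMulRot B ψ := by
  simp only [traceMulRot, Real.Angle.cos_add_pi, Real.Angle.sin_add_pi]
  ring

theorem exists_traceMulRot_ne_zero (B : SL2R) : ∃ ψ, traceMulRot B ψ ≠ 0 := by
  have hdet : B 0 0 * B 1 1 - B 0 1 * B 1 0 = 1 := by
    rw [← Matrix.det_fin_two]
    exact B.det_coe
  have hvec : (B 0 0 + B 1 1) ^ 2 + (B 1 0 - B 0 1) ^ 2 =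
      (B 0 0 - B 1 1) ^ 2 + (B 0 1 + B 1 0) ^ 2 + 4 := by
    linear_combination 4 * hdet
  by_contra! h
  have h0 : B 0 0 + B 1 1 = 0 := by simpa [traceMulRot] using h 0
  have h1 : B 1 0 - B 0 1 = 0 := by simpa [traceMulRot] using h (π / 2 : ℝ)
  rw [h0, h1] at hvec
  nlinarith [sq_nonneg (B 0 0 - B 1 1), sq_nonneg (B 0 1 + B 1 0)]

theorem infinite_elliptic_powers_general (θ : ℝ)
    (hirr : Irrational (θ / Real.pi)) (B : SL2R) :
    {n : ℤ | 0 < |Matrix.trace ((B * rotMat θ ^ n : SL2R) : Matrix (Fin 2) (Fin 2) ℝ)| ∧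
      |Matrix.trace ((B * rotMat θ ^ n : SL2R) : Matrix (Fin 2) (Fin 2) ℝ)| < 2}.Infinite := by
  have hdense : DenseRange (fun n : ℤ => n • (θ : Real.Angle)) :=
    AddCircle.denseRange_zsmul_coe_iff.2 <| by
      simpa [div_div, mul_comm] using hirr.div_natCast two_ne_zero
  have hopen : IsOpen {ψ | |traceMulRot B ψ| ∈ Set.Ioo 0 2} :=
    isOpen_Ioo.preimage (continuous_traceMulRot B).abs
  obtain ⟨ψ, hψ⟩ := exists_traceMulRot_ne_zero B
  have hne : {ψ | |traceMulRot B ψ| ∈ Set.Ioo 0 2}.Nonempty :=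
    (continuous_traceMulRot B).exists_abs_mem_Ioo hψ (traceMulRot_add_pi B ψ) two_pos
  convert hdense.infinite_preimage hopen hne using 1
  ext n
  simp only [Set.mem_ofPred_eq, Set.mem_preimage, Set.mem_Ioo]
  rw [rotMat_zpow, ← Real.Angle.coe_zsmul, zsmul_eq_mul, trace_mul_rotMat]

/-- If `θ ∈ (0,π)` with `θ/π` irrational and `B ∈ SL(2,ℝ)`, then for infinitely
many `n ∈ ℤ` we have `0 < |tr (B · R(θ)ⁿ)| < 2`; in particular `B · R(θ)ⁿ` is elliptic
for infinitely many `n`. -/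
theorem infinite_elliptic_powers (θ : ℝ) (hθ : θ ∈ Set.Ioo (0:ℝ) Real.pi)
    (hirr : Irrational (θ / Real.pi)) (B : SL2R) :
    {n : ℤ | 0 < |Matrix.trace ((B * rotMat θ ^ n : SL2R) : Matrix (Fin 2) (Fin 2) ℝ)| ∧
      |Matrix.trace ((B * rotMat θ ^ n : SL2R) : Matrix (Fin 2) (Fin 2) ℝ)| < 2}.Infinite :=
  infinite_elliptic_powers_general θ hirr B
end
end

section
/- Let θ ∈ ℝ with θ/π irrational, and let v = (v₁, v₂) and w = (w₁, w₂) be vectors in ℝ². If the set of integers n ∈ ℤ for which |v₁·cos(nθ) + v₂·sin(nθ)| = |w₁·cos(nθ) + w₂·sin(nθ)| is infinite, then |v₁| = |w₁|. -/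
open Real

/-- Let `θ` be a real number with `θ/π` irrational, and `v, w ∈ ℝ²`. If
`|v₁ cos(nθ) + v₂ sin(nθ)| = |w₁ cos(nθ) + w₂ sin(nθ)|` for infinitely many `n ∈ ℤ`,
then `|v₁| = |w₁|`. -/
theorem abs_fst_eq_of_infinite_abs_eq (θ : ℝ) (hirr : Irrational (θ / Real.pi))
    (v w : ℝ × ℝ)
    (h : {n : ℤ | |v.1 * Real.cos (n * θ) + v.2 * Real.sin (n * θ)| =
        |w.1 * Real.cos (n * θ) + w.2 * Real.sin (n * θ)|}.Infinite) :
    |v.1| = |w.1| := by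
  have hpi : Real.pi ≠ 0 := Real.pi_ne_zero
  set a : ℝ := v.1^2 - w.1^2 with ha
  set b : ℝ := v.1*v.2 - w.1*w.2 with hb
  set g : ℝ := v.2^2 - w.2^2 with hg
  set α : ℂ := ((a - g)/4 : ℝ) - ((b/2 : ℝ) : ℂ) * Complex.I with hα
  set γ : ℂ := ((a - g)/4 : ℝ) + ((b/2 : ℝ) : ℂ) * Complex.I with hγ
  set β : ℂ := (((a + g)/2 : ℝ) : ℂ) with hβ
  set p : Polynomial ℂ := Polynomial.C α * Polynomial.X^2 + Polynomial.C β * Polynomial.X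
      + Polynomial.C γ with hp
  set φ : ℤ → ℂ := fun n => Complex.exp ((2 * n * θ : ℝ) * Complex.I) with hφ
  -- φ is injective
  have hinj : Function.Injective φ := by
    intro n m hnm
    simp only [hφ] at hnm
    rw [Complex.exp_eq_exp_iff_exists_int] at hnm
    obtain ⟨k, hk⟩ := hnm
    have him := congrArg Complex.im hk
    simp [Complex.add_im, Complex.mul_im, Complex.ofReal_re, Complex.ofReal_im] at him
    -- him : 2 * n * θ = 2 * m * θ + k * (2 * π)  (in some form)
    by_contra hne
    have hnm0 : (n : ℝ) - (m : ℝ) ≠ 0 := by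
      intro h0
      apply hne
      exact_mod_cast sub_eq_zero.mp h0
    apply hirr
    refine ⟨(k : ℚ) / ((n : ℚ) - (m : ℚ)), ?_⟩
    push_cast
    rw [div_eq_div_iff hnm0 hpi]
    nlinarith [him]
  -- each φ n for n in the set is a root of p
  have hroot : ∀ n ∈ {n : ℤ | |v.1 * Real.cos (n * θ) + v.2 * Real.sin (n * θ)| =
      |w.1 * Real.cos (n * θ) + w.2 * Real.sin (n * θ)|}, p.IsRoot (φ n) := by
    intro n hn
    simp only [Set.mem_setOf_eq] at hn
    have hsq : (v.1 * Real.cos (n * θ) + v.2 * Real.sin (n * θ))^2 =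
        (w.1 * Real.cos (n * θ) + w.2 * Real.sin (n * θ))^2 := by
      rw [← sq_abs (v.1 * _ + _), ← sq_abs (w.1 * _ + _), hn]
    set c := Real.cos (n * θ) with hc
    set d := Real.sin (n * θ) with hd
    have heqR : a * c^2 + 2*b*c*d + g*d^2 = 0 := by
      simp only [ha, hb, hg]; linear_combination hsq
    have hpyR : c^2 + d^2 = 1 := by rw [hc, hd]; exact Real.cos_sq_add_sin_sq _
    have hpy : (c:ℂ)^2 + (d:ℂ)^2 = 1 := by exact_mod_cast hpyR
    have heq : (a:ℂ) * c^2 + 2*b*c*d + g*d^2 = 0 := by exact_mod_cast heqR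
    have hI : Complex.I^2 = -1 := Complex.I_sq
    have hφn : φ n = ((c:ℂ) + (d:ℂ) * Complex.I)^2 := by
      simp only [hφ]
      have h2 : ((2 * n * θ : ℝ) : ℂ) * Complex.I
          = ((n*θ : ℝ):ℂ) * Complex.I + ((n*θ:ℝ):ℂ) * Complex.I := by
        push_cast; ring
      rw [h2, Complex.exp_add, Complex.exp_mul_I, hc, hd]
      push_cast [Complex.ofReal_cos, Complex.ofReal_sin]
      ring
    simp only [Polynomial.IsRoot, hp, Polynomial.eval_add, Polynomial.eval_mul,
      Polynomial.eval_pow, Polynomial.eval_C, Polynomial.eval_X, hφn]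
    rw [hα, hβ, hγ]
    push_cast
    linear_combination (((c:ℂ)+(d:ℂ)*Complex.I)^2) * heq +
      ((1/4:ℂ)*(g:ℂ) + (-1/4:ℂ)*(a:ℂ) + (-1/2:ℂ)*Complex.I*(b:ℂ) + (3/4:ℂ)*(d:ℂ)^2*(g:ℂ) + (1/4:ℂ)*(d:ℂ)^2*(a:ℂ) + (-1/2:ℂ)*(d:ℂ)^2*Complex.I*(b:ℂ) + (-1:ℂ)*(c:ℂ)*(d:ℂ)*Complex.I*(g:ℂ) + (-1:ℂ)*(c:ℂ)*(d:ℂ)*Complex.I*(a:ℂ) + (-1/4:ℂ)*(c:ℂ)^2*(g:ℂ) + (-3/4:ℂ)*(c:ℂ)^2*(a:ℂ) + (-1/2:ℂ)*(c:ℂ)^2*Complex.I*(b:ℂ)) * hpy +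
      ((1/2:ℂ)*(d:ℂ)^2*(g:ℂ) + (1/2:ℂ)*(d:ℂ)^2*(a:ℂ) + (-3/4:ℂ)*(d:ℂ)^4*(g:ℂ) + (-1/4:ℂ)*(d:ℂ)^4*(a:ℂ) + (1/2:ℂ)*(d:ℂ)^4*Complex.I*(b:ℂ) + (-1/4:ℂ)*(d:ℂ)^4*Complex.I^2*(g:ℂ) + (1/4:ℂ)*(d:ℂ)^4*Complex.I^2*(a:ℂ) + (-1/2:ℂ)*(d:ℂ)^4*Complex.I^3*(b:ℂ) + (-1:ℂ)*(c:ℂ)*(d:ℂ)^3*Complex.I*(g:ℂ) + (1:ℂ)*(c:ℂ)*(d:ℂ)^3*Complex.I*(a:ℂ) + (-2:ℂ)*(c:ℂ)*(d:ℂ)^3*Complex.I^2*(b:ℂ) + (-3/2:ℂ)*(c:ℂ)^2*(d:ℂ)^2*(g:ℂ) + (1/2:ℂ)*(c:ℂ)^2*(d:ℂ)^2*(a:ℂ) + (-3:ℂ)*(c:ℂ)^2*(d:ℂ)^2*Complex.I*(b:ℂ) + (-2:ℂ)*(c:ℂ)^3*(d:ℂ)*(b:ℂ)) * hI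
  -- p has infinitely many roots, hence is zero
  have hinf : {x : ℂ | p.IsRoot x}.Infinite := by
    apply Set.Infinite.mono (s := φ '' {n : ℤ | |v.1 * Real.cos (n * θ) + v.2 * Real.sin (n * θ)| =
        |w.1 * Real.cos (n * θ) + w.2 * Real.sin (n * θ)|})
    · rintro x ⟨n, hn, rfl⟩
      exact hroot n hn
    · exact h.image (hinj.injOn)
  have hp0 : p = 0 := Polynomial.eq_zero_of_infinite_isRoot p hinf
  have h1 : p.eval 1 = 0 := by rw [hp0]; simp
  have hA : (a : ℂ) = 0 := by
    simp only [hp, Polynomial.eval_add, Polynomial.eval_mul, Polynomial.eval_pow,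
      Polynomial.eval_C, Polynomial.eval_X, one_pow, mul_one] at h1
    rw [hα, hβ, hγ] at h1
    push_cast at h1 ⊢
    linear_combination h1
  have haR : a = 0 := by exact_mod_cast hA
  have hvw : v.1^2 = w.1^2 := by rw [ha] at haR; linarith
  nlinarith [abs_nonneg v.1, abs_nonneg w.1, sq_abs v.1, sq_abs w.1]
end
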